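/- For n ≥ 2 and 1 ≤ g ≤ n−1, if F₁ and F₂ are two distinct g-good-neighbor faulty sets of HCN_n each of size at most 2^g(n+2−g) − 1, then there exists an edge of HCN_n between V(HCN_n) \ (F₁ ∪ F₂) and the symmetric difference F₁ Δ F₂. -/

import Mathlib

/-- Vertices of the hierarchical cubic network: pairs (cluster label, position). -/
abbrev HVert (n : ℕ) := (Fin n → Bool) × (Fin n → Bool)

/-- The hierarchical cubic network HCN_n. Within a cluster (same first coordinate),
two vertices are adjacent iff their second coordinates differ in exactly one bit.
Crossing edges: (x,y) with x ≠ y is adjacent to (y,x); (x,x) is adjacent to (x̄,x̄). -/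
def HCN (n : ℕ) : SimpleGraph (HVert n) :=
  SimpleGraph.fromRel (fun u v =>
    (u.1 = v.1 ∧ (Finset.univ.filter (fun i => u.2 i ≠ v.2 i)).card = 1) ∨
    (u.1 ≠ u.2 ∧ v = (u.2, u.1)) ∨
    (u.1 = u.2 ∧ v = (fun i => !u.1 i, fun i => !u.2 i)))

/-- `u` and `v` are joined by a crossing edge of HCN_n. -/
def IsCrossing (n : ℕ) (u v : HVert n) : Prop :=
  ((u.1 ≠ u.2 ∧ v = (u.2, u.1)) ∨ (u.1 = u.2 ∧ v = (fun i => !u.1 i, fun i => !u.2 i))) ∨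
  ((v.1 ≠ v.2 ∧ u = (v.2, v.1)) ∨ (v.1 = v.2 ∧ u = (fun i => !v.1 i, fun i => !v.2 i)))

/-- `F` is a g-good-neighbor faulty set of HCN_n: every vertex outside `F`
has at least `g` neighbors outside `F`. -/
def GoodNbrSet (n g : ℕ) (F : Set (HVert n)) : Prop :=
  ∀ v ∉ F, g ≤ (((HCN n).neighborSet v) \ F).ncard

/-! Suppose no edge joins the outside of `F₁ ∪ F₂` to `D = F₁ Δ F₂`. Then `N[D] ⊆ F₁ ∪ F₂`,
and the good-neighbour condition makes `F₁ \ F₂`, `F₂ \ F₁`, hence `D`, sets of minimum degree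
`g` in HCN_n.

In the hypercube `Q_d`, a nonempty set of minimum degree `g` has at least `2^g` points and a
closed neighbourhood of at least `2^g (d + 1 - g)` points: split the cube along a coordinate in
which two adjacent points of the set differ and induct. Each vertex of HCN_n has a single crossing
edge, so the part of `D` in a cluster has minimum degree `g - 1` in `Q_n` (`g` if `D` lies in one
cluster). Adding up the closed neighbourhoods of the cluster parts and the crossing partners that
leave the clusters met by `D` gives `|N[D]| ≥ B := 2^g (n + 2 - g)`, and `2 |N[D]| ≥ 2B + |D|`
once `|D| ≥ 2^(g+1)`, by cases on the number of clusters met by `D`.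

If `F₁ ⊆ F₂` then `N[D] ⊆ F₂`, so `|F₂| ≥ B`; symmetrically if `F₂ ⊆ F₁`. Otherwise both halves
of `D` have `2^g` points and `|F₁| + |F₂| = 2 |F₁ ∪ F₂| - |D| ≥ 2 |N[D]| - |D| ≥ 2B`. Either way
one of the `Fᵢ` is too large. -/

lemma Nat.two_pow_mul_eq_two_mul {g : ℕ} (hg : 1 ≤ g) (a : ℕ) :
    2 ^ g * a = 2 * (2 ^ (g - 1) * a) := by
  rw [← mul_assoc, mul_comm 2, Nat.two_pow_pred_mul_two hg]

lemma Set.ncard_symmDiff_add_ncard_inter {α : Type*} [Finite α] (s t : Set α) :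
    (symmDiff s t).ncard + (s ∩ t).ncard = (s ∪ t).ncard := by
  rw [← Set.ncard_union_eq (s := symmDiff s t) (t := s ∩ t) (disjoint_symmDiff_inf s t)]
  exact congrArg Set.ncard (symmDiff_sup_inf s t)

lemma Set.ncard_symmDiff {α : Type*} [Finite α] (s t : Set α) :
    (symmDiff s t).ncard = (s \ t).ncard + (t \ s).ncard := by
  rw [Set.symmDiff_def, Set.ncard_union_eq disjoint_sdiff_sdiff]

lemma Set.ncard_inter_fst_preimage {α β : Type*} [Finite α] [Finite β] (S : Set (α × β))
    (Z : Finset α) :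
    (S ∩ Prod.fst ⁻¹' Z).ncard = ∑ z ∈ Z, (Prod.mk z ⁻¹' S).ncard := by
  classical
  induction Z using Finset.induction_on with
  | empty => simp
  | insert a Z ha ih =>
    have hsplit : S ∩ Prod.fst ⁻¹' ↑(insert a Z) =
        Prod.mk a '' (Prod.mk a ⁻¹' S) ∪ S ∩ Prod.fst ⁻¹' Z := by
      ext ⟨z, y⟩
      simp only [Finset.coe_insert, Set.mem_inter_iff, Set.mem_preimage, Set.mem_insert_iff,
        Finset.mem_coe, Set.mem_union, Set.mem_image, Prod.mk.injEq]
      constructor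
      · rintro ⟨hS, rfl | hz⟩
        · exact Or.inl ⟨y, hS, rfl, rfl⟩
        · exact Or.inr ⟨hS, hz⟩
      · rintro (⟨y', hS, rfl, rfl⟩ | ⟨hS, hz⟩)
        · exact ⟨hS, Or.inl rfl⟩
        · exact ⟨hS, Or.inr hz⟩
    have hdisj : Disjoint (Prod.mk a '' (Prod.mk a ⁻¹' S)) (S ∩ Prod.fst ⁻¹' Z) := by
      rw [Set.disjoint_left]
      rintro _ ⟨y, -, rfl⟩ ⟨-, hz⟩
      exact ha hz
    rw [hsplit, Set.ncard_union_eq hdisj,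
      Set.ncard_image_of_injective _ (Prod.mk_right_injective a), ih, Finset.sum_insert ha]

lemma Set.ncard_eq_sum_ncard_preimage_mk {α β : Type*} [Finite α] [Finite β]
    {S : Set (α × β)} {Z : Finset α} (hS : Prod.fst '' S ⊆ Z) :
    S.ncard = ∑ z ∈ Z, (Prod.mk z ⁻¹' S).ncard := by
  rw [← Set.ncard_inter_fst_preimage, Set.inter_eq_left.2 (Set.image_subset_iff.1 hS)]

namespace SimpleGraph

variable {V W : Type*} {G : SimpleGraph V} {H : SimpleGraph W}

variable (G) in
def closedNbhd (s : Set V) : Set V := s ∪ {y | ∃ x ∈ s, G.Adj x y}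

variable (G) in
def MinDegreeOn (g : ℕ) (s : Set V) : Prop :=
  ∀ x ∈ s, g ≤ (G.neighborSet x ∩ s).ncard

lemma subset_closedNbhd (s : Set V) : s ⊆ G.closedNbhd s := Set.subset_union_left

lemma mem_closedNbhd_of_adj {s : Set V} {x y : V} (hx : x ∈ s) (h : G.Adj x y) :
    y ∈ G.closedNbhd s :=
  Or.inr ⟨x, hx, h⟩

lemma closedNbhd_comap_subset (f : G →g H) (s : Set W) :
    G.closedNbhd (f ⁻¹' s) ⊆ f ⁻¹' H.closedNbhd s := by
  rintro y (hy | ⟨x, hx, hxy⟩)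
  · exact Or.inl hy
  · exact Or.inr ⟨f x, hx, f.map_adj hxy⟩

lemma MinDegreeOn.union {g : ℕ} {s t : Set V} [Finite V] (hs : G.MinDegreeOn g s)
    (ht : G.MinDegreeOn g t) : G.MinDegreeOn g (s ∪ t) := by
  rintro x (hx | hx)
  · exact (hs x hx).trans (Set.ncard_le_ncard (by gcongr; exact Set.subset_union_left))
  · exact (ht x hx).trans (Set.ncard_le_ncard (by gcongr; exact Set.subset_union_right))

lemma MinDegreeOn.exists_adj {g : ℕ} {s : Set V} (hs : G.MinDegreeOn (g + 1) s) {x : V}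
    (hx : x ∈ s) : ∃ y ∈ s, G.Adj x y := by
  have := hs x hx
  obtain ⟨y, hy, hys⟩ := Set.nonempty_of_ncard_ne_zero (s := G.neighborSet x ∩ s) (by omega)
  exact ⟨y, hys, hy⟩

lemma MinDegreeOn.comap [Finite W] {g c : ℕ} {s : Set W} (hs : H.MinDegreeOn g s)
    (f : G ↪g H)
    (hc : ∀ x ∈ f ⁻¹' s, ((H.neighborSet (f x) ∩ s) \ Set.range f).ncard ≤ c) :
    G.MinDegreeOn (g - c) (f ⁻¹' s) := by
  intro x hx
  have hsub : H.neighborSet (f x) ∩ s ⊆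
      f '' (G.neighborSet x ∩ f ⁻¹' s) ∪ ((H.neighborSet (f x) ∩ s) \ Set.range f) := by
    rintro w ⟨hw, hws⟩
    by_cases hwf : w ∈ Set.range f
    · obtain ⟨y, rfl⟩ := hwf
      exact Or.inl ⟨y, ⟨f.map_adj_iff.1 hw, hws⟩, rfl⟩
    · exact Or.inr ⟨⟨hw, hws⟩, hwf⟩
  have := (hs (f x) hx).trans ((Set.ncard_le_ncard hsub).trans (Set.ncard_union_le _ _))
  rw [Set.ncard_image_of_injective _ f.injective] at this
  have := hc x hx
  omega

def hypercube (ι : Type*) [Fintype ι] [DecidableEq ι] : SimpleGraph (ι → Bool) where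
  Adj x y := hammingDist x y = 1
  symm := ⟨fun x y h => by rwa [hammingDist_comm]⟩
  loopless := ⟨fun x h => by simp at h⟩

namespace hypercube

variable {ι : Type*} [Fintype ι] [DecidableEq ι]

lemma adj_iff {x y : ι → Bool} : (hypercube ι).Adj x y ↔ hammingDist x y = 1 := Iff.rfl

lemma hammingDist_eq_add (i : ι) (x y : ι → Bool) :
    hammingDist x y = (if x i = y i then 0 else 1) +
      hammingDist (Equiv.funSplitAt i Bool x).2 (Equiv.funSplitAt i Bool y).2 := by
  simp only [hammingDist, Finset.card_filter, Fintype.sum_eq_add_sum_subtype_ne _ i,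
    Equiv.funSplitAt_apply, ite_not]

def face (i : ι) (b : Bool) : hypercube {j // j ≠ i} ↪g hypercube ι where
  toFun x := (Equiv.funSplitAt i Bool).symm (b, x)
  inj' := (Equiv.funSplitAt i Bool).symm.injective.comp (Prod.mk_right_injective b)
  map_rel_iff' := by simp [adj_iff, hammingDist_eq_add i]

lemma hammingDist_face (i : ι) (b c : Bool) (x y : {j // j ≠ i} → Bool) :
    hammingDist (face i b x) (face i c y) = (if b = c then 0 else 1) + hammingDist x y := by
  simp [face, hammingDist_eq_add i]

lemma face_surj (i : ι) (x : ι → Bool) : ∃ y, face i (x i) y = x :=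
  ⟨(Equiv.funSplitAt i Bool x).2, (Equiv.funSplitAt i Bool).symm_apply_apply x⟩

lemma card_subtype_ne_add_one (i : ι) : Fintype.card {j // j ≠ i} + 1 = Fintype.card ι := by
  have := Fintype.card_pos_iff.2 ⟨i⟩
  rw [Fintype.card_subtype_compl, Fintype.card_subtype_eq]
  omega

lemma neighborSet_face_diff_range_subset (i : ι) (b : Bool) (x : {j // j ≠ i} → Bool) :
    (hypercube ι).neighborSet (face i b x) \ Set.range (face i b) ⊆ {face i (!b) x} := by
  rintro w ⟨hw, hwr⟩
  obtain ⟨y, hy⟩ := face_surj i w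
  have hwi : b ≠ w i := fun h => hwr ⟨y, h ▸ hy⟩
  rw [← hy, mem_neighborSet, adj_iff, hammingDist_face, if_neg hwi, add_eq_left,
    hammingDist_eq_zero] at hw
  rw [← hy, hw, Set.mem_singleton_iff]
  congr
  cases b <;> cases h : w i <;> simp_all

lemma minDegreeOn_face {g : ℕ} {T : Set (ι → Bool)} (hT : (hypercube ι).MinDegreeOn (g + 1) T)
    (i : ι) (b : Bool) : (hypercube {j // j ≠ i}).MinDegreeOn g (face i b ⁻¹' T) := by
  refine hT.comap (face i b) (c := 1) fun x _ => ?_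
  calc _ ≤ ({face i (!b) x} : Set (ι → Bool)).ncard :=
        Set.ncard_le_ncard ((Set.sdiff_subset_sdiff_left Set.inter_subset_left).trans
          (neighborSet_face_diff_range_subset i b x))
    _ = 1 := Set.ncard_singleton _

lemma ncard_eq_face_add_face (i : ι) (S : Set (ι → Bool)) :
    S.ncard = (face i false ⁻¹' S).ncard + (face i true ⁻¹' S).ncard := by
  have h := Set.ncard_inter_fst_preimage ((Equiv.funSplitAt i Bool).symm ⁻¹' S) Finset.univ
  rw [Finset.coe_univ, Set.preimage_univ, Set.inter_univ, Fintype.sum_bool,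
    Set.ncard_preimage_of_injective_subset_range (Equiv.injective _) (by simp)] at h
  rw [h, add_comm]
  rfl

lemma exists_forall_face_nonempty {T : Set (ι → Bool)} {x y : ι → Bool} (hx : x ∈ T)
    (hy : y ∈ T) (hxy : x ≠ y) : ∃ i, ∀ b, (face i b ⁻¹' T).Nonempty := by
  obtain ⟨i, hi⟩ := Function.ne_iff.1 hxy
  refine ⟨i, fun b => ?_⟩
  obtain rfl | rfl : b = x i ∨ b = y i := by
    revert hi; cases b <;> cases x i <;> cases y i <;> simp
  · obtain ⟨x', hx'⟩ := face_surj i x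
    exact ⟨x', by rwa [Set.mem_preimage, hx']⟩
  · obtain ⟨y', hy'⟩ := face_surj i y
    exact ⟨y', by rwa [Set.mem_preimage, hy']⟩

theorem two_pow_le_ncard (g : ℕ) {T : Set (ι → Bool)} (hT : T.Nonempty)
    (hdeg : (hypercube ι).MinDegreeOn g T) : 2 ^ g ≤ T.ncard := by
  induction g generalizing ι with
  | zero => exact (Set.ncard_pos (Set.toFinite T)).2 hT
  | succ g ih =>
    obtain ⟨x, hx⟩ := hT
    obtain ⟨y, hy, hxy⟩ := hdeg.exists_adj hx
    obtain ⟨i, hi⟩ := exists_forall_face_nonempty hx hy hxy.ne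
    have h0 := ih (hi false) (minDegreeOn_face hdeg i false)
    have h1 := ih (hi true) (minDegreeOn_face hdeg i true)
    rw [ncard_eq_face_add_face i, pow_succ]
    omega

lemma adj_update (x : ι → Bool) (i : ι) :
    (hypercube ι).Adj x (Function.update x i (!x i)) := by
  rw [adj_iff, hammingDist_eq_add i]
  have : ∀ j : {j // j ≠ i}, Function.update x i (!x i) j = x j := fun j =>
    Function.update_of_ne j.prop _ _
  simp [this]

lemma card_add_one_le_ncard_closedNbhd {T : Set (ι → Bool)} (hT : T.Nonempty) :
    Fintype.card ι + 1 ≤ ((hypercube ι).closedNbhd T).ncard := by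
  obtain ⟨x, hx⟩ := hT
  set f : ι → ι → Bool := fun i => Function.update x i (!x i)
  have hfx : ∀ i, f i i ≠ x i := by simp [f]
  have hf : f.Injective := fun i j h => by
    by_contra hij
    exact hfx i (by rw [h]; exact Function.update_of_ne hij _ _)
  have hsub : insert x (Set.range f) ⊆ (hypercube ι).closedNbhd T := by
    rintro _ (rfl | ⟨i, rfl⟩)
    · exact subset_closedNbhd T hx
    · exact mem_closedNbhd_of_adj hx (adj_update x i)
  have hxf : x ∉ Set.range f := fun ⟨i, h⟩ => hfx i (by rw [h])
  calc Fintype.card ι + 1 = (insert x (Set.range f)).ncard := by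
        rw [Set.ncard_insert_of_notMem hxf, Set.ncard_range_of_injective hf,
          Nat.card_eq_fintype_card]
    _ ≤ _ := Set.ncard_le_ncard hsub

lemma ncard_closedNbhd_face_add_le (i : ι) (T : Set (ι → Bool)) :
    ((hypercube _).closedNbhd (face i false ⁻¹' T)).ncard +
      ((hypercube _).closedNbhd (face i true ⁻¹' T)).ncard ≤
        ((hypercube ι).closedNbhd T).ncard := by
  rw [ncard_eq_face_add_face i ((hypercube ι).closedNbhd T)]
  exact add_le_add (Set.ncard_le_ncard (closedNbhd_comap_subset (face i false).toHom T))
    (Set.ncard_le_ncard (closedNbhd_comap_subset (face i true).toHom T))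

theorem two_mul_card_le_ncard_closedNbhd {T : Set (ι → Bool)} {x y : ι → Bool} (hx : x ∈ T)
    (hy : y ∈ T) (hxy : x ≠ y) :
    2 * Fintype.card ι ≤ ((hypercube ι).closedNbhd T).ncard := by
  obtain ⟨i, hi⟩ := exists_forall_face_nonempty hx hy hxy
  have h0 := card_add_one_le_ncard_closedNbhd (hi false)
  have h1 := card_add_one_le_ncard_closedNbhd (hi true)
  have := ncard_closedNbhd_face_add_le i T
  have := card_subtype_ne_add_one i
  omega

theorem le_ncard_closedNbhd (g : ℕ) {T : Set (ι → Bool)} (hg : g ≤ Fintype.card ι)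
    (hT : T.Nonempty) (hdeg : (hypercube ι).MinDegreeOn g T) :
    2 ^ g * (Fintype.card ι + 1 - g) ≤ ((hypercube ι).closedNbhd T).ncard := by
  induction g generalizing ι with
  | zero => simpa using card_add_one_le_ncard_closedNbhd hT
  | succ g ih =>
    obtain ⟨x, hx⟩ := hT
    obtain ⟨y, hy, hxy⟩ := hdeg.exists_adj hx
    obtain ⟨i, hi⟩ := exists_forall_face_nonempty hx hy hxy.ne
    have hcard := card_subtype_ne_add_one i
    have h0 := ih (by omega) (hi false) (minDegreeOn_face hdeg i false)
    have h1 := ih (by omega) (hi true) (minDegreeOn_face hdeg i true)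
    have := ncard_closedNbhd_face_add_le i T
    set d := Fintype.card {j // j ≠ i}
    have hpow : 2 ^ (g + 1) * (Fintype.card ι + 1 - (g + 1)) = 2 * (2 ^ g * (d + 1 - g)) := by
      rw [← hcard, show d + 1 + 1 - (g + 1) = d + 1 - g by omega, pow_succ]; ring
    omega

end hypercube
end SimpleGraph

namespace HCN

open SimpleGraph

variable {n : ℕ}

/-- The neighbour of `u` along its crossing edge. -/
def partner (u : HVert n) : HVert n :=
  if u.1 = u.2 then (fun i => !u.1 i, fun i => !u.2 i) else (u.2, u.1)

lemma partner_partner (u : HVert n) : partner (partner u) = u := by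
  unfold partner
  by_cases h : u.1 = u.2
  · ext i <;> simp [h]
  · simp [h, Ne.symm]

lemma partner_injective : Function.Injective (partner (n := n)) :=
  Function.LeftInverse.injective partner_partner

lemma partner_fst_ne (hn : 0 < n) (u : HVert n) : (partner u).1 ≠ u.1 := by
  unfold partner
  split_ifs with h
  · exact fun h' => Bool.not_ne_self (u.1 ⟨0, hn⟩) (congrFun h' ⟨0, hn⟩)
  · exact Ne.symm h

lemma partner_fst_of_ne {u : HVert n} (h : u.1 ≠ u.2) : (partner u).1 = u.2 := by
  simp [partner, h]

lemma adj_iff (hn : 0 < n) {u v : HVert n} :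
    (HCN n).Adj u v ↔ (u.1 = v.1 ∧ (hypercube (Fin n)).Adj u.2 v.2) ∨ v = partner u := by
  have hrel : ∀ u v : HVert n,
      ((u.1 = v.1 ∧ (Finset.univ.filter (fun i => u.2 i ≠ v.2 i)).card = 1) ∨
        (u.1 ≠ u.2 ∧ v = (u.2, u.1)) ∨
        (u.1 = u.2 ∧ v = (fun i => !u.1 i, fun i => !u.2 i))) ↔
      (u.1 = v.1 ∧ (hypercube (Fin n)).Adj u.2 v.2) ∨ v = partner u := by
    intro u v
    by_cases h : u.1 = u.2 <;> simp [partner, h, hypercube.adj_iff, hammingDist]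
  rw [HCN, SimpleGraph.fromRel_adj, hrel, hrel]
  constructor
  · rintro ⟨-, h | ⟨h1, h2⟩ | h⟩
    · exact h
    · exact Or.inl ⟨h1.symm, h2.symm⟩
    · exact Or.inr (by rw [h, partner_partner])
  · intro h
    refine ⟨?_, Or.inl h⟩
    rintro rfl
    rcases h with ⟨-, h⟩ | h
    · exact h.ne rfl
    · exact partner_fst_ne hn u (by rw [← h])

lemma adj_partner (hn : 0 < n) (u : HVert n) : (HCN n).Adj u (partner u) :=
  (adj_iff hn).2 (Or.inr rfl)

lemma eq_partner_of_adj (hn : 0 < n) {u v : HVert n} (h : (HCN n).Adj u v) (hv : u.1 ≠ v.1) :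
    v = partner u :=
  ((adj_iff hn).1 h).resolve_left fun h' => hv h'.1

def clusterEmb (hn : 0 < n) (z : Fin n → Bool) : hypercube (Fin n) ↪g HCN n where
  toFun := Prod.mk z
  inj' := Prod.mk_right_injective z
  map_rel_iff' {x y} := by
    change (HCN n).Adj (z, x) (z, y) ↔ _
    rw [adj_iff hn]
    exact ⟨fun h => (h.resolve_right fun h' => partner_fst_ne hn (z, x) (by rw [← h'])).2,
      fun h => Or.inl ⟨rfl, h⟩⟩

lemma minDegreeOn_cluster (hn : 0 < n) {g : ℕ} {D : Set (HVert n)}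
    (hD : (HCN n).MinDegreeOn g D) (z : Fin n → Bool) :
    (hypercube (Fin n)).MinDegreeOn (g - 1) (Prod.mk z ⁻¹' D) := by
  refine hD.comap (clusterEmb hn z) fun x _ => ?_
  refine (Set.ncard_le_ncard (t := {partner (z, x)}) fun v hv => ?_).trans
    (Set.ncard_singleton _).le
  obtain ⟨⟨hadj, -⟩, hvz⟩ := hv
  exact eq_partner_of_adj hn hadj fun h => hvz ⟨v.2, Prod.ext h rfl⟩

lemma minDegreeOn_cluster_of_subset (hn : 0 < n) {g : ℕ} {D : Set (HVert n)}
    (hD : (HCN n).MinDegreeOn g D) {z : Fin n → Bool} (hz : ∀ v ∈ D, v.1 = z) :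
    (hypercube (Fin n)).MinDegreeOn g (Prod.mk z ⁻¹' D) := by
  refine Nat.sub_zero g ▸ hD.comap (clusterEmb hn z) fun x _ => ?_
  rw [Nat.le_zero, Set.ncard_eq_zero]
  refine Set.eq_empty_of_forall_notMem fun v ⟨⟨_, hv⟩, hvz⟩ => hvz ⟨v.2, ?_⟩
  simp [clusterEmb, ← hz v hv]

def crossInside (D : Set (HVert n)) : Set (HVert n) := {v ∈ D | (partner v).1 ∈ Prod.fst '' D}

lemma crossInside_subset (D : Set (HVert n)) : crossInside D ⊆ D := fun _ h => h.1

lemma preimage_mk_crossInside_subset (D : Set (HVert n)) (z : Fin n → Bool) :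
    Prod.mk z ⁻¹' crossInside D ⊆ Prod.fst '' D := by
  rintro y ⟨hy, hp⟩
  by_cases hzy : z = y
  · exact ⟨_, hy, hzy⟩
  · rwa [partner_fst_of_ne hzy] at hp

lemma crossInside_eq_empty (hn : 0 < n) {D : Set (HVert n)} {z : Fin n → Bool}
    (hz : ∀ v ∈ D, v.1 = z) : crossInside D = ∅ := by
  refine Set.eq_empty_of_forall_notMem fun v ⟨hv, w, hw, hpw⟩ => partner_fst_ne hn v ?_
  rw [← hpw, hz w hw, hz v hv]

/-- Each cluster `z` met by `D` contributes the hypercube closed neighbourhood of its part of `D`;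
every vertex of `D` whose crossing edge leaves the clusters met by `D` contributes its partner. -/
theorem sum_ncard_closedNbhd_cluster_add_le (hn : 0 < n) (D : Set (HVert n))
    {Z : Finset (Fin n → Bool)} (hZ : ↑Z = Prod.fst '' D) :
    ∑ z ∈ Z, ((hypercube (Fin n)).closedNbhd (Prod.mk z ⁻¹' D)).ncard + D.ncard ≤
      ((HCN n).closedNbhd D).ncard + (crossInside D).ncard := by
  set N := (HCN n).closedNbhd D
  have hsplit := Set.ncard_inter_add_ncard_sdiff_eq_ncard N (Prod.fst ⁻¹' Z)
  have hin : ∑ z ∈ Z, ((hypercube (Fin n)).closedNbhd (Prod.mk z ⁻¹' D)).ncard ≤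
      (N ∩ Prod.fst ⁻¹' Z).ncard := by
    rw [Set.ncard_inter_fst_preimage]
    exact Finset.sum_le_sum fun z _ =>
      Set.ncard_le_ncard (closedNbhd_comap_subset (clusterEmb hn z).toHom D)
  have hout : partner '' (D \ crossInside D) ⊆ N \ Prod.fst ⁻¹' Z := by
    rintro _ ⟨v, ⟨hv, hvc⟩, rfl⟩
    exact ⟨mem_closedNbhd_of_adj hv (adj_partner hn v), fun h => hvc ⟨hv, hZ ▸ h⟩⟩
  have hcross := Set.ncard_le_ncard hout
  rw [Set.ncard_image_of_injective _ partner_injective,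
    Set.ncard_sdiff (crossInside_subset D)] at hcross
  have := Set.ncard_le_ncard (crossInside_subset D)
  omega

section Clusters

variable {D : Set (HVert n)} {Z : Finset (Fin n → Bool)}

lemma preimage_mk_nonempty (hZ : ↑Z = Prod.fst '' D) {z : Fin n → Bool} (hz : z ∈ Z) :
    (Prod.mk z ⁻¹' D).Nonempty := by
  obtain ⟨v, hv, rfl⟩ : z ∈ Prod.fst '' D := hZ ▸ hz
  exact ⟨v.2, hv⟩

lemma card_pos_of_nonempty (hZ : ↑Z = Prod.fst '' D) (hD : D.Nonempty) : 0 < Z.card :=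
  Finset.card_pos.2 (Finset.coe_nonempty.1 (hZ ▸ hD.image _))

lemma fst_eq_of_coe_eq_singleton {z : Fin n → Bool} (hZ : ↑({z} : Finset _) = Prod.fst '' D)
    {v : HVert n} (hv : v ∈ D) : v.1 = z := by
  have : v.1 ∈ (↑({z} : Finset (Fin n → Bool)) : Set (Fin n → Bool)) := hZ ▸ ⟨v, hv, rfl⟩
  simpa using this

lemma ncard_preimage_mk_crossInside_le (hZ : ↑Z = Prod.fst '' D) (z : Fin n → Bool) :
    (Prod.mk z ⁻¹' crossInside D).ncard ≤ Z.card := by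
  rw [← Set.ncard_coe_finset, hZ]
  exact Set.ncard_le_ncard (preimage_mk_crossInside_subset D z)

lemma ncard_eq_sum_cluster {S : Set (HVert n)} (hS : S ⊆ D) (hZ : ↑Z = Prod.fst '' D) :
    S.ncard = ∑ z ∈ Z, (Prod.mk z ⁻¹' S).ncard :=
  Set.ncard_eq_sum_ncard_preimage_mk (hZ ▸ Set.image_mono hS)

end Clusters

lemma le_ncard_closedNbhd_cluster {g : ℕ} (hg : 1 ≤ g) (hgn : g ≤ n) {D : Set (HVert n)}
    (hD : (HCN n).MinDegreeOn g D) {z : Fin n → Bool} (hz : (Prod.mk z ⁻¹' D).Nonempty) :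
    2 ^ (g - 1) * (n + 2 - g) ≤ ((hypercube (Fin n)).closedNbhd (Prod.mk z ⁻¹' D)).ncard := by
  have := hypercube.le_ncard_closedNbhd (g - 1) (by rw [Fintype.card_fin]; omega) hz
    (minDegreeOn_cluster (by omega) hD z)
  rwa [Fintype.card_fin, show n + 1 - (g - 1) = n + 2 - g by omega] at this

lemma le_ncard_closedNbhd_of_single_cluster {g : ℕ} (hn : 0 < n) (hgn : g ≤ n)
    {D : Set (HVert n)} (hD : (HCN n).MinDegreeOn g D) {z : Fin n → Bool}
    (hZ : ↑({z} : Finset _) = Prod.fst '' D) :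
    2 ^ g * (n + 1 - g) + D.ncard ≤ ((HCN n).closedNbhd D).ncard := by
  have hz := fun v => fst_eq_of_coe_eq_singleton (v := v) hZ
  have hcore := sum_ncard_closedNbhd_cluster_add_le hn D hZ
  rw [Finset.sum_singleton, crossInside_eq_empty hn hz, Set.ncard_empty] at hcore
  have hb := hypercube.le_ncard_closedNbhd g (by simpa using hgn)
    (preimage_mk_nonempty hZ (Finset.mem_singleton_self z))
    (minDegreeOn_cluster_of_subset hn hD hz)
  rw [Fintype.card_fin] at hb
  omega

theorem two_pow_le_ncard (hn : 0 < n) {g : ℕ} (hg : 1 ≤ g) {D : Set (HVert n)}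
    (hne : D.Nonempty) (hD : (HCN n).MinDegreeOn g D) : 2 ^ g ≤ D.ncard := by
  obtain ⟨Z, hZ⟩ := (Prod.fst '' D).toFinite.exists_finset_coe
  rw [ncard_eq_sum_cluster subset_rfl hZ]
  obtain hk | hk : Z.card = 1 ∨ 2 ≤ Z.card := by have := card_pos_of_nonempty hZ hne; omega
  · obtain ⟨z, rfl⟩ := Finset.card_eq_one.1 hk
    rw [Finset.sum_singleton]
    exact hypercube.two_pow_le_ncard g (preimage_mk_nonempty hZ (Finset.mem_singleton_self z))
      (minDegreeOn_cluster_of_subset hn hD fun v => fst_eq_of_coe_eq_singleton hZ)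
  · calc 2 ^ g = 2 * 2 ^ (g - 1) := by simpa using Nat.two_pow_mul_eq_two_mul hg 1
      _ ≤ Z.card • 2 ^ (g - 1) := Nat.mul_le_mul_right _ hk
      _ ≤ _ := Finset.card_nsmul_le_sum _ _ _ fun z hz =>
          hypercube.two_pow_le_ncard _ (preimage_mk_nonempty hZ hz) (minDegreeOn_cluster hn hD z)

theorem le_ncard_closedNbhd {g : ℕ} (hg : 1 ≤ g) (hgn : g ≤ n) {D : Set (HVert n)}
    (hne : D.Nonempty) (hD : (HCN n).MinDegreeOn g D) :
    2 ^ g * (n + 2 - g) ≤ ((HCN n).closedNbhd D).ncard := by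
  have hn : 0 < n := by omega
  obtain ⟨Z, hZ⟩ := (Prod.fst '' D).toFinite.exists_finset_coe
  obtain hk | hk : Z.card = 1 ∨ 2 ≤ Z.card := by have := card_pos_of_nonempty hZ hne; omega
  · obtain ⟨z, rfl⟩ := Finset.card_eq_one.1 hk
    have := le_ncard_closedNbhd_of_single_cluster hn hgn hD hZ
    have := two_pow_le_ncard hn hg hne hD
    have : 2 ^ g * (n + 2 - g) = 2 ^ g * (n + 1 - g) + 2 ^ g := by
      rw [show n + 2 - g = n + 1 - g + 1 by omega, mul_add_one]
    omega
  · have hcore := sum_ncard_closedNbhd_cluster_add_le hn D hZ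
    have := Set.ncard_le_ncard (crossInside_subset D)
    have hsum := Finset.card_nsmul_le_sum Z _ _ fun z hz =>
      le_ncard_closedNbhd_cluster hg hgn hD (preimage_mk_nonempty hZ hz)
    rw [smul_eq_mul] at hsum
    have := Nat.mul_le_mul_right (2 ^ (g - 1) * (n + 2 - g)) hk
    rw [Nat.two_pow_mul_eq_two_mul hg]
    omega

lemma add_min_le_ncard_closedNbhd_cluster (hn : 2 ≤ n) {D : Set (HVert n)}
    (hD : (HCN n).MinDegreeOn 1 D) {z : Fin n → Bool} (hz : (Prod.mk z ⁻¹' D).Nonempty) :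
    n + min (Prod.mk z ⁻¹' crossInside D).ncard 2 ≤
      ((hypercube (Fin n)).closedNbhd (Prod.mk z ⁻¹' D)).ncard := by
  have h1 := le_ncard_closedNbhd_cluster le_rfl (by omega) hD hz
  rw [Nat.sub_self, pow_zero, one_mul] at h1
  rcases le_or_gt (Prod.mk z ⁻¹' crossInside D).ncard 1 with hs | hs
  · omega
  · obtain ⟨x, y, hx, hy, hxy⟩ := (Set.one_lt_ncard_iff (Set.toFinite _)).1 hs
    have := hypercube.two_mul_card_le_ncard_closedNbhd (T := Prod.mk z ⁻¹' D)
      (crossInside_subset D hx) (crossInside_subset D hy) hxy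
    rw [Fintype.card_fin] at this
    omega

/-- For `g = 1` the bound `|crossInside D| ≤ k²` is too weak against `n + 1` per cluster;
instead, a cluster part holding two `crossInside` points has at least `2n` closed neighbours. -/
lemma two_mul_add_ncard_le_of_minDegreeOn_one (hn : 2 ≤ n) {D : Set (HVert n)}
    (hD : (HCN n).MinDegreeOn 1 D) (hcard : 4 ≤ D.ncard) {Z : Finset (Fin n → Bool)}
    (hZ : ↑Z = Prod.fst '' D) (hk : Z.card = 2 ∨ Z.card = 3) :
    2 * (2 * (n + 1)) + D.ncard ≤ 2 * ((HCN n).closedNbhd D).ncard := by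
  have hcore := sum_ncard_closedNbhd_cluster_add_le (by omega) D hZ
  have hcross := Set.ncard_le_ncard (crossInside_subset D)
  set b : (Fin n → Bool) → ℕ :=
    fun z => ((hypercube (Fin n)).closedNbhd (Prod.mk z ⁻¹' D)).ncard
  set s : (Fin n → Bool) → ℕ := fun z => (Prod.mk z ⁻¹' crossInside D).ncard
  have hσ : (crossInside D).ncard = Z.sum s := ncard_eq_sum_cluster (crossInside_subset D) hZ
  have hper : ∀ z ∈ Z, n + min (s z) 2 ≤ b z ∧ s z ≤ Z.card := fun z hz =>
    ⟨add_min_le_ncard_closedNbhd_cluster hn hD (preimage_mk_nonempty hZ hz),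
      ncard_preimage_mk_crossInside_le hZ z⟩
  rcases hk with hk | hk
  · have : ∑ z ∈ Z, (n + s z) ≤ Z.sum b := Finset.sum_le_sum fun z hz => by
      show n + s z ≤ b z
      have := hper z hz
      omega
    rw [Finset.sum_add_distrib, Finset.sum_const, smul_eq_mul, hk, ← hσ] at this
    omega
  · have : ∑ z ∈ Z, (2 * n + s z) ≤ 2 * Z.sum b := by
      rw [Finset.mul_sum]
      exact Finset.sum_le_sum fun z hz => by
        show 2 * n + s z ≤ 2 * b z
        have := hper z hz
        omega
    rw [Finset.sum_add_distrib, Finset.sum_const, smul_eq_mul, hk, ← hσ] at this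
    omega

theorem two_mul_add_ncard_le {g : ℕ} (hg : 1 ≤ g) (hgn : g < n) {D : Set (HVert n)}
    (hD : (HCN n).MinDegreeOn g D) (hcard : 2 ^ (g + 1) ≤ D.ncard) :
    2 * (2 ^ g * (n + 2 - g)) + D.ncard ≤ 2 * ((HCN n).closedNbhd D).ncard := by
  have hn : 0 < n := by omega
  have hne : D.Nonempty :=
    Set.nonempty_of_ncard_ne_zero (by have := Nat.one_le_two_pow (n := g + 1); omega)
  obtain ⟨Z, hZ⟩ := (Prod.fst '' D).toFinite.exists_finset_coe
  obtain hk | hk : Z.card = 1 ∨ 2 ≤ Z.card := by have := card_pos_of_nonempty hZ hne; omega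
  · obtain ⟨z, rfl⟩ := Finset.card_eq_one.1 hk
    have := le_ncard_closedNbhd_of_single_cluster hn hgn.le hD hZ
    have : 2 ^ g * (n + 2 - g) = 2 ^ g * (n + 1 - g) + 2 ^ g := by
      rw [show n + 2 - g = n + 1 - g + 1 by omega, mul_add_one]
    rw [pow_succ] at hcard
    omega
  have hcore := sum_ncard_closedNbhd_cluster_add_le hn D hZ
  have hDN := Set.ncard_le_ncard (subset_closedNbhd (G := HCN n) D)
  have hcross := Set.ncard_le_ncard (crossInside_subset D)
  have hpow := Nat.two_pow_mul_eq_two_mul hg (n + 2 - g)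
  set P := 2 ^ (g - 1) * (n + 2 - g)
  have hsum :
      Z.card * P ≤ ∑ z ∈ Z, ((hypercube (Fin n)).closedNbhd (Prod.mk z ⁻¹' D)).ncard :=
    Finset.card_nsmul_le_sum Z _ _ fun z hz =>
      le_ncard_closedNbhd_cluster hg hgn.le hD (preimage_mk_nonempty hZ hz)
  by_cases hk4 : 4 ≤ Z.card
  · have := Nat.mul_le_mul_right P hk4
    omega
  rcases hg.eq_or_lt with rfl | hg2
  · rw [pow_one, show n + 2 - 1 = n + 1 by omega]
    exact two_mul_add_ncard_le_of_minDegreeOn_one (by omega) hD (by simpa using hcard) hZ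
      (by omega)
  have hσ : (crossInside D).ncard ≤ Z.card * Z.card := by
    rw [ncard_eq_sum_cluster (crossInside_subset D) hZ]
    exact Finset.sum_le_card_nsmul Z _ _ fun z _ => ncard_preimage_mk_crossInside_le hZ z
  have hP : 2 * 3 ≤ P := Nat.mul_le_mul (Nat.le_self_pow (by omega) 2) (by omega)
  have h8 : 2 ^ 3 ≤ 2 ^ (g + 1) := Nat.pow_le_pow_right two_pos (by omega)
  obtain hk23 | hk23 : Z.card = 2 ∨ Z.card = 3 := by omega
  all_goals rw [hk23] at hsum hσ
  all_goals omega

lemma minDegreeOn_sdiff_of_goodNbrSet {g : ℕ} {F F' : Set (HVert n)} (hF : GoodNbrSet n g F)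
    (hclosed : ∀ v ∈ F' \ F, ∀ u, (HCN n).Adj v u → u ∈ F ∪ F') :
    (HCN n).MinDegreeOn g (F' \ F) := fun v hv =>
  (hF v hv.2).trans <| Set.ncard_le_ncard fun u ⟨hu, huF⟩ =>
    ⟨hu, (hclosed v hv u hu).resolve_left huF, huF⟩

end HCN

theorem stmt_16_general (n g : ℕ) (hg1 : 1 ≤ g) (hg2 : g ≤ n - 1)
    (F1 F2 : Set (HVert n)) (hne : F1 ≠ F2)
    (h1 : GoodNbrSet n g F1) (h2 : GoodNbrSet n g F2)
    (hc1 : F1.ncard ≤ 2 ^ g * (n + 2 - g) - 1)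
    (hc2 : F2.ncard ≤ 2 ^ g * (n + 2 - g) - 1) :
    ∃ u ∉ F1 ∪ F2, ∃ v ∈ symmDiff F1 F2, (HCN n).Adj u v := by
  by_contra hcon
  push Not at hcon
  have hclosed : ∀ v ∈ symmDiff F1 F2, ∀ u, (HCN n).Adj v u → u ∈ F1 ∪ F2 :=
    fun v hv u huv => by_contra fun hu => hcon u hu v hv huv.symm
  have hN : (HCN n).closedNbhd (symmDiff F1 F2) ⊆ F1 ∪ F2 := by
    rintro u (hu | ⟨v, hv, huv⟩)
    · exact Set.symmDiff_subset_union hu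
    · exact hclosed v hv u huv
  have hD21 : (HCN n).MinDegreeOn g (F2 \ F1) :=
    HCN.minDegreeOn_sdiff_of_goodNbrSet h1 fun v hv => hclosed v (Or.inr hv)
  have hD12 : (HCN n).MinDegreeOn g (F1 \ F2) :=
    HCN.minDegreeOn_sdiff_of_goodNbrSet h2 fun v hv u huv => (hclosed v (Or.inl hv) u huv).symm
  have hD : (HCN n).MinDegreeOn g (symmDiff F1 F2) := by
    rw [Set.symmDiff_def]
    exact hD12.union hD21
  have hDne : (symmDiff F1 F2).Nonempty :=
    Set.nonempty_iff_ne_empty.2 fun h => hne (symmDiff_eq_bot.1 h)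
  have hB : 1 * 1 ≤ 2 ^ g * (n + 2 - g) := Nat.mul_le_mul Nat.one_le_two_pow (by omega)
  have hBN := HCN.le_ncard_closedNbhd hg1 (by omega) hDne hD
  rcases (F1 \ F2).eq_empty_or_nonempty with h12 | h12
  · have hF2 := hN.trans (Set.union_subset (Set.sdiff_eq_empty.1 h12) subset_rfl)
    have := Set.ncard_le_ncard hF2
    omega
  rcases (F2 \ F1).eq_empty_or_nonempty with h21 | h21
  · have hF1 := hN.trans (Set.union_subset subset_rfl (Set.sdiff_eq_empty.1 h21))
    have := Set.ncard_le_ncard hF1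
    omega
  have hA12 := HCN.two_pow_le_ncard (by omega) hg1 h12 hD12
  have hA21 := HCN.two_pow_le_ncard (by omega) hg1 h21 hD21
  have hDcard := Set.ncard_symmDiff F1 F2
  have hB2 := HCN.two_mul_add_ncard_le hg1 (by omega) hD (by rw [pow_succ]; omega)
  have hNcard := Set.ncard_le_ncard hN
  have hunion := Set.ncard_symmDiff_add_ncard_inter F1 F2
  have hinter := Set.ncard_union_add_ncard_inter F1 F2
  omega

/-- For n ≥ 2 and 1 ≤ g ≤ n-1, any two distinct g-good-neighbor faulty sets of
HCN_n of size at most 2^g(n+2-g)-1 are distinguishable: there is an edge from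
outside F₁ ∪ F₂ into the symmetric difference F₁ Δ F₂. -/
theorem stmt_16 (n g : ℕ) (hn : 2 ≤ n) (hg1 : 1 ≤ g) (hg2 : g ≤ n - 1)
    (F1 F2 : Set (HVert n)) (hne : F1 ≠ F2)
    (h1 : GoodNbrSet n g F1) (h2 : GoodNbrSet n g F2)
    (hc1 : F1.ncard ≤ 2 ^ g * (n + 2 - g) - 1)
    (hc2 : F2.ncard ≤ 2 ^ g * (n + 2 - g) - 1) :
    ∃ u ∉ F1 ∪ F2, ∃ v ∈ symmDiff F1 F2, (HCN n).Adj u v :=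
  stmt_16_general n g hg1 hg2 F1 F2 hne h1 h2 hc1 hc2
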